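/- For every complex number z with 0 < Re(z) < 1 and 2^(1-z) ≠ 1, the analytic continuation of the Riemann zeta function satisfies ζ(z) = (1 - 2^(1-z))⁻¹ · ∑_{n=1}^∞ (-1)^(n-1) n^(-z), where the alternating series converges. -/

import Mathlib

/-!
Pairing consecutive terms, `(2k+1)^(-z) - (2k+2)^(-z) = O(‖z‖ k^(-Re z - 1))` by the mean value
theorem, so the paired series converges absolutely and locally uniformly on `Re z > 0` and defines a
holomorphic function `η` there. The terms of the alternating series tend to zero, so its partial
sums converge to `η z` as well. For `Re z > 1`, splitting `ζ` into its even and odd terms gives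
`η = (1 - 2^(1-z)) ζ`, and the identity theorem on the connected domain `{Re z > 0} \ {1}`
extends this equality.
-/

open Complex Filter Topology

lemma tendsto_of_tendsto_even_of_tendsto_odd {α : Type*} {g : ℕ → α} {l : Filter α}
    (he : Tendsto (fun m ↦ g (2 * m)) atTop l) (ho : Tendsto (fun m ↦ g (2 * m + 1)) atTop l) :
    Tendsto g atTop l := by
  intro s hs
  obtain ⟨a, ha⟩ := eventually_atTop.1 (he hs)
  obtain ⟨b, hb⟩ := eventually_atTop.1 (ho hs)
  refine eventually_atTop.2 ⟨2 * (a + b), fun n hn ↦ ?_⟩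
  obtain ⟨m, rfl | rfl⟩ := Nat.even_or_odd' n
  · exact ha m (by omega)
  · exact hb m (by omega)

lemma sum_range_two_mul {M : Type*} [AddCommMonoid M] (f : ℕ → M) (m : ℕ) :
    ∑ n ∈ Finset.range (2 * m), f n = ∑ k ∈ Finset.range m, (f (2 * k) + f (2 * k + 1)) := by
  induction m with
  | zero => simp
  | succ m ih =>
    rw [mul_add, Finset.sum_range_succ, Finset.sum_range_succ, Finset.sum_range_succ, ih, add_assoc]

lemma tendsto_sum_range_of_hasSum_pairs {M : Type*} [AddCommMonoid M] [TopologicalSpace M]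
    [ContinuousAdd M] {f : ℕ → M} {S : M} (hf : Tendsto f atTop (𝓝 0))
    (hS : HasSum (fun k ↦ f (2 * k) + f (2 * k + 1)) S) :
    Tendsto (fun N ↦ ∑ n ∈ Finset.range N, f n) atTop (𝓝 S) := by
  have heven : Tendsto (fun m ↦ ∑ n ∈ Finset.range (2 * m), f n) atTop (𝓝 S) := by
    simpa only [sum_range_two_mul] using hS.tendsto_sum_nat
  refine tendsto_of_tendsto_even_of_tendsto_odd heven ?_
  simpa only [Finset.sum_range_succ, add_zero, Function.comp_def] using
    heven.add (hf.comp (strictMono_mul_left_of_pos two_pos).tendsto_atTop)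

lemma norm_ofReal_add_one_cpow_neg_sub_le {a : ℝ} (ha : 0 < a) {z : ℂ} (hz : -1 ≤ z.re) :
    ‖((a + 1 : ℝ) : ℂ) ^ (-z) - (a : ℂ) ^ (-z)‖ ≤ ‖z‖ * a ^ (-z.re - 1) := by
  refine norm_image_sub_le_of_norm_deriv_le_segment' (f := fun t : ℝ ↦ (t : ℂ) ^ (-z))
    (f' := fun t ↦ -z * (t : ℂ) ^ (-z - 1)) (C := ‖z‖ * a ^ (-z.re - 1)) (a := a) (b := a + 1)
    (fun t ht ↦ ?_) (fun t ht ↦ ?_) (a + 1) (Set.right_mem_Icc.2 (by linarith)) |>.trans_eq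
    (by rw [add_sub_cancel_left, mul_one])
  · have ht0 : 0 < t := ha.trans_le ht.1
    simpa using (((hasDerivAt_id (t : ℂ)).cpow_const (c := -z)
      (ofReal_mem_slitPlane.2 ht0)).comp_ofReal).hasDerivWithinAt
  · have ht0 : 0 < t := ha.trans_le ht.1
    rw [norm_mul, norm_neg, norm_cpow_eq_rpow_re_of_pos ht0]
    gcongr
    simpa using Real.rpow_le_rpow_of_nonpos ha ht.1 (by simp; linarith)

lemma summable_nat_add_one_rpow {p : ℝ} (hp : p < -1) :
    Summable fun k : ℕ ↦ ((k : ℝ) + 1) ^ p := by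
  exact_mod_cast (summable_nat_add_iff 1).2 (Real.summable_nat_rpow.2 hp)

noncomputable def etaPair (z : ℂ) (k : ℕ) : ℂ :=
  (2 * k + 1 : ℂ) ^ (-z) - (2 * k + 2 : ℂ) ^ (-z)

/-- Only meaningful for `0 < z.re`: elsewhere the paired series diverges and `tsum` is `0`. -/
noncomputable def dirichletEta (z : ℂ) : ℂ :=
  ∑' k, etaPair z k

lemma norm_etaPair_le {z : ℂ} (hz : -1 ≤ z.re) (k : ℕ) :
    ‖etaPair z k‖ ≤ ‖z‖ * ((k : ℝ) + 1) ^ (-z.re - 1) := by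
  have hmvt := norm_ofReal_add_one_cpow_neg_sub_le (a := 2 * k + 1) (by positivity) hz
  rw [etaPair, ← norm_neg, neg_sub]
  push_cast at hmvt
  rw [show (2 * k + 1 + 1 : ℂ) = 2 * k + 2 by ring] at hmvt
  refine hmvt.trans (mul_le_mul_of_nonneg_left ?_ (norm_nonneg z))
  exact Real.rpow_le_rpow_of_nonpos (by positivity) (by linarith [(k.cast_nonneg : (0:ℝ) ≤ k)])
    (by linarith)

lemma summable_etaPair {z : ℂ} (hz : 0 < z.re) : Summable (etaPair z) :=
  .of_norm_bounded ((summable_nat_add_one_rpow (by linarith)).mul_left ‖z‖)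
    (norm_etaPair_le (by linarith))

lemma differentiableAt_dirichletEta {z : ℂ} (hz : 0 < z.re) :
    DifferentiableAt ℂ dirichletEta z := by
  set U := {w : ℂ | z.re / 2 < w.re} ∩ Metric.ball 0 (‖z‖ + 1)
  have hU : IsOpen U := (isOpen_lt continuous_const continuous_re).inter Metric.isOpen_ball
  have hzU : z ∈ U := ⟨show z.re / 2 < z.re by linarith, by simp⟩
  have hbound (k : ℕ) (w : ℂ) (hw : w ∈ U) :
      ‖etaPair w k‖ ≤ (‖z‖ + 1) * ((k : ℝ) + 1) ^ (-(z.re / 2) - 1) := by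
    have hre : z.re / 2 < w.re := hw.1
    have hnorm : ‖w‖ < ‖z‖ + 1 := by simpa using hw.2
    refine (norm_etaPair_le (by linarith) k).trans (mul_le_mul hnorm.le ?_ (by positivity)
      (by positivity))
    exact Real.rpow_le_rpow_of_exponent_le (by linarith [(k.cast_nonneg : (0:ℝ) ≤ k)])
      (by linarith)
  have hdiff (k : ℕ) : DifferentiableOn ℂ (fun w ↦ etaPair w k) U := by
    refine (Differentiable.sub ?_ ?_).differentiableOn <;>
      exact differentiable_neg.const_cpow (Or.inl (by norm_cast))
  exact (differentiableOn_tsum_of_summable_norm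
    ((summable_nat_add_one_rpow (by linarith)).mul_left _) hdiff hU hbound).differentiableAt
    (hU.mem_nhds hzU)

lemma neg_one_pow_div_cpow_pair (z : ℂ) (k : ℕ) :
    (-1 : ℂ) ^ (2 * k) / ((2 * k : ℕ) + 1 : ℂ) ^ z
      + (-1 : ℂ) ^ (2 * k + 1) / ((2 * k + 1 : ℕ) + 1 : ℂ) ^ z = etaPair z k := by
  simp only [etaPair, pow_succ, pow_mul, cpow_neg]
  push_cast
  ring_nf

lemma tendsto_neg_one_pow_div_cpow {z : ℂ} (hz : 0 < z.re) :
    Tendsto (fun n : ℕ ↦ (-1 : ℂ) ^ n / ((n : ℂ) + 1) ^ z) atTop (𝓝 0) := by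
  rw [tendsto_zero_iff_norm_tendsto_zero]
  have hnorm (n : ℕ) : ‖(-1 : ℂ) ^ n / ((n : ℂ) + 1) ^ z‖ = ((n : ℝ) + 1) ^ (-z.re) := by
    rw [norm_div, norm_pow, norm_neg, norm_one, one_pow, ← ofReal_natCast, ← ofReal_one,
      ← ofReal_add, norm_cpow_eq_rpow_re_of_pos (by positivity), Real.rpow_neg (by positivity),
      one_div]
  simp only [hnorm]
  exact (tendsto_rpow_neg_atTop hz).comp
    (tendsto_atTop_add_const_right _ 1 tendsto_natCast_atTop_atTop)

lemma tendsto_sum_range_neg_one_pow_div_cpow {z : ℂ} (hz : 0 < z.re) :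
    Tendsto (fun N ↦ ∑ n ∈ Finset.range N, (-1 : ℂ) ^ n / ((n : ℂ) + 1) ^ z) atTop
      (𝓝 (dirichletEta z)) := by
  refine tendsto_sum_range_of_hasSum_pairs (tendsto_neg_one_pow_div_cpow hz) ?_
  have hη : HasSum (etaPair z) (dirichletEta z) := (summable_etaPair hz).hasSum
  simpa only [neg_one_pow_div_cpow_pair] using hη

lemma hasSum_etaPair_of_one_lt_re {z : ℂ} (hz : 1 < z.re) :
    HasSum (etaPair z) ((1 - 2 ^ (1 - z)) * riemannZeta z) := by
  set a : ℕ → ℂ := fun n ↦ ((n : ℂ) + 1) ^ (-z)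
  have ha : HasSum a (riemannZeta z) := by
    have hs : Summable a := by
      simpa [a, cpow_neg] using (summable_nat_add_iff 1).2 (summable_one_div_nat_cpow.2 hz)
    simpa [zeta_eq_tsum_one_div_nat_add_one_cpow hz, a, cpow_neg] using hs.hasSum
  have hodd : HasSum (fun k ↦ a (2 * k + 1)) (2 ^ (-z) * riemannZeta z) := by
    refine (ha.mul_left _).congr_fun fun k ↦ ?_
    have h2 : ((2 * k + 1 : ℕ) : ℂ) + 1 = (2 : ℕ) * ((k + 1 : ℕ) : ℂ) := by push_cast; ring
    simp only [a, h2, natCast_mul_natCast_cpow]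
    push_cast
    rfl
  obtain ⟨S, heven⟩ := ha.summable.comp_injective (mul_right_injective₀ (two_ne_zero' ℕ))
  have hζ : riemannZeta z = S + 2 ^ (-z) * riemannZeta z := ha.unique (heven.even_add_odd hodd)
  have h2z : (2 : ℂ) ^ (1 - z) = 2 * 2 ^ (-z) := by
    rw [sub_eq_add_neg, cpow_add _ _ two_ne_zero, cpow_one]
  have hvalue : (1 - 2 ^ (1 - z)) * riemannZeta z = S - 2 ^ (-z) * riemannZeta z := by
    rw [h2z]
    linear_combination hζ
  rw [hvalue]
  refine (heven.sub hodd).congr_fun fun k ↦ ?_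
  simp only [etaPair, a, Function.comp_apply]
  push_cast
  ring_nf

lemma isPreconnected_re_pos_diff_one : IsPreconnected ({z : ℂ | 0 < z.re} \ {1}) := by
  have hupper := (convex_halfSpace_re_gt 0).inter (convex_halfSpace_im_gt 0)
  have hlower := (convex_halfSpace_re_gt 0).inter (convex_halfSpace_im_lt 0)
  have hstrip := (convex_halfSpace_re_gt 0).inter (convex_halfSpace_re_lt 1)
  have hright := convex_halfSpace_re_gt 1
  have hunion : {z : ℂ | 0 < z.re} \ {1} = ((({z | 0 < z.re} ∩ {z | 0 < z.im}) ∪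
      ({z | 0 < z.re} ∩ {z | z.re < 1})) ∪ ({z | 0 < z.re} ∩ {z | z.im < 0})) ∪
      {z | 1 < z.re} := by
    ext z
    simp only [Set.mem_sdiff, Set.mem_union, Set.mem_inter_iff, Set.mem_ofPred_eq,
      Set.mem_singleton_iff, Complex.ext_iff, one_re, one_im]
    constructor
    · rintro ⟨hre, hne⟩
      rcases lt_trichotomy z.im 0 with h | h | h <;> rcases lt_trichotomy z.re 1 with h' | h' | h'
      all_goals tauto
    · rintro (((⟨h1, h2⟩ | ⟨h1, h2⟩) | ⟨h1, h2⟩) | h) <;> refine ⟨by linarith, ?_⟩ <;>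
        rintro ⟨h3, h4⟩ <;> linarith
  rw [hunion]
  refine (((hupper.isPreconnected.union (1 / 2 + I) ?_ ?_ hstrip.isPreconnected).union
    (1 / 2 - I) ?_ ?_ hlower.isPreconnected).union (2 + I) ?_ ?_ hright.isPreconnected)
  all_goals norm_num

lemma dirichletEta_eq_mul_riemannZeta {z : ℂ} (hz : 0 < z.re) (hz1 : z ≠ 1) :
    dirichletEta z = (1 - 2 ^ (1 - z)) * riemannZeta z := by
  set U := {w : ℂ | 0 < w.re} \ {1}
  have hU : IsOpen U := (isOpen_lt continuous_const continuous_re).sdiff isClosed_singleton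
  have hη : AnalyticOnNhd ℂ dirichletEta U := DifferentiableOn.analyticOnNhd
    (fun w hw ↦ (differentiableAt_dirichletEta hw.1).differentiableWithinAt) hU
  have hζ : AnalyticOnNhd ℂ (fun w ↦ (1 - 2 ^ (1 - w)) * riemannZeta w) U := by
    refine DifferentiableOn.analyticOnNhd (fun w hw ↦ ?_) hU
    refine DifferentiableAt.differentiableWithinAt ?_
    exact ((differentiableAt_id.const_sub 1).const_cpow (Or.inl two_ne_zero)).const_sub 1 |>.mul
      (differentiableAt_riemannZeta hw.2)
  have hagree : dirichletEta =ᶠ[𝓝 2] fun w ↦ (1 - 2 ^ (1 - w)) * riemannZeta w := by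
    filter_upwards [(isOpen_lt continuous_const continuous_re).mem_nhds
      (show (1 : ℝ) < (2 : ℂ).re by norm_num)] with w hw
    exact (hasSum_etaPair_of_one_lt_re hw).tsum_eq
  exact hη.eqOn_of_preconnected_of_eventuallyEq hζ isPreconnected_re_pos_diff_one
    ⟨by norm_num, by norm_num⟩ hagree ⟨hz, hz1⟩

theorem zeta_eta_critical_strip_general (z : ℂ) (hz0 : 0 < z.re)
    (h2 : (2 : ℂ) ^ ((1 : ℂ) - z) ≠ 1) :
    ∃ S : ℂ,
      Tendsto (fun N : ℕ => ∑ n ∈ Finset.range N, (-1 : ℂ) ^ n / ((n : ℂ) + 1) ^ z)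
        atTop (nhds S) ∧
      riemannZeta z = (1 - 2 ^ ((1 : ℂ) - z))⁻¹ * S := by
  have hz1 : z ≠ 1 := by
    rintro rfl
    simp at h2
  refine ⟨dirichletEta z, tendsto_sum_range_neg_one_pow_div_cpow hz0, ?_⟩
  rw [dirichletEta_eq_mul_riemannZeta hz0 hz1, inv_mul_cancel_left₀ (sub_ne_zero.2 h2.symm)]

theorem zeta_eta_critical_strip (z : ℂ) (hz0 : 0 < z.re) (hz1 : z.re < 1)
    (h2 : (2 : ℂ) ^ ((1 : ℂ) - z) ≠ 1) :
    ∃ S : ℂ,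
      Tendsto (fun N : ℕ => ∑ n ∈ Finset.range N, (-1 : ℂ) ^ n / ((n : ℂ) + 1) ^ z)
        atTop (nhds S) ∧
      riemannZeta z = (1 - 2 ^ ((1 : ℂ) - z))⁻¹ * S :=
  zeta_eta_critical_strip_general z hz0 h2
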